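/- arXiv:2307.12305 — 2 statements merged into one kernel-verified Lean document; each statement's English description precedes it below -/
import Mathlib

section
/- No deterministic truthful mechanism for the MVbM problem achieves an approximation ratio better than 2: for every deterministic truthful mechanism M defined on all MVbM instances and every δ > 0, there exists an instance with edge profile E and a b-matching μ for E such that w(μ) > (2 − δ)·w(M(E)). -/
abbrev Matching (n m : ℕ) := Fin m → Option (Fin n)

def load {n m : ℕ} (μ : Matching n m) (i : Fin n) : ℕ :=
  (Finset.univ.filter fun j => μ j = some i).card

def assignedSet {n m : ℕ} (μ : Matching n m) (i : Fin n) : Finset (Fin m) :=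
  Finset.univ.filter fun j => μ j = some i

def IsBMatching {n m : ℕ} (b : Fin n → ℕ) (E : Fin n → Finset (Fin m))
    (μ : Matching n m) : Prop :=
  (∀ j i, μ j = some i → j ∈ E i) ∧ ∀ i, load μ i ≤ b i

noncomputable def util {n m : ℕ} (q : Fin m → ℝ) (μ : Matching n m) (i : Fin n) : ℝ :=
  ∑ j ∈ assignedSet μ i, q j

noncomputable def welfare {n m : ℕ} (q : Fin m → ℝ) (μ : Matching n m) : ℝ :=
  ∑ i, util q μ i

/-- Task processing order: decreasing value, ties broken by smaller task index. -/
noncomputable def taskOrder {m : ℕ} (q : Fin m → ℝ) : List (Fin m) :=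
  (List.finRange m).mergeSort fun j k => decide (q k < q j ∨ (q j = q k ∧ j ≤ k))

noncomputable def apStep {n m : ℕ} (b : Fin n → ℕ) (E : Fin n → Finset (Fin m))
    (μ : Matching n m) (j : Fin m) : Matching n m :=
  match (List.finRange n).find? (fun i => decide (j ∈ E i ∧ load μ i < b i)) with
  | some i => Function.update μ j (some i)
  | none => μ

/-- The mechanism `M_AP`. -/
noncomputable def MAP {n m : ℕ} (b : Fin n → ℕ) (q : Fin m → ℝ)
    (E : Fin n → Finset (Fin m)) : Matching n m :=
  (taskOrder q).foldl (apStep b E) (fun _ => none)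

/-- The `min k |S|` highest-valued tasks of `S` (ties broken by smaller index). -/
noncomputable def topTasks {m : ℕ} (q : Fin m → ℝ) (S : Finset (Fin m)) (k : ℕ) :
    Finset (Fin m) :=
  (((taskOrder q).filter fun j => decide (j ∈ S)).take k).toFinset

noncomputable def remTasks {n m : ℕ} (b : Fin n → ℕ) (q : Fin m → ℝ)
    (E : Fin n → Finset (Fin m)) : ℕ → Finset (Fin m)
  | 0 => Finset.univ
  | i + 1 =>
    if h : i < n then
      remTasks b q E i \ topTasks q (E ⟨i, h⟩ ∩ remTasks b q E i) (b ⟨i, h⟩)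
    else remTasks b q E i

/-- Agent `i`'s FCFS policy / allocation `B_i`. -/
noncomputable def FCFS {n m : ℕ} (b : Fin n → ℕ) (q : Fin m → ℝ)
    (E : Fin n → Finset (Fin m)) (i : Fin n) : Finset (Fin m) :=
  topTasks q (E i ∩ remTasks b q E i.val) (b i)

/-- A deterministic mechanism in the Edge Manipulation Setting: for every numbers of
agents and tasks, capacities, task values, and reported edge profile, it returns a
matching. -/
def Mechanism := ∀ (n m : ℕ), (Fin n → ℕ) → (Fin m → ℝ) →
    (Fin n → Finset (Fin m)) → Matching n m

/-- The mechanism always returns a `b`-matching of the reported edge profile. -/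
def Feasible (M : Mechanism) : Prop :=
  ∀ (n m : ℕ) (b : Fin n → ℕ) (q : Fin m → ℝ) (E : Fin n → Finset (Fin m)),
    IsBMatching b E (M n m b q E)

/-- A valid MVbM instance: every capacity is at least `1` and every task value is
positive. -/
def ValidInstance {n m : ℕ} (b : Fin n → ℕ) (q : Fin m → ℝ) : Prop :=
  (∀ i, 1 ≤ b i) ∧ (∀ j, 0 < q j)

/-- Truthfulness: no agent can increase its utility by reporting a nonempty subset of
its true edge set. -/
def Truthful (M : Mechanism) : Prop :=
  ∀ (n m : ℕ) (b : Fin n → ℕ) (q : Fin m → ℝ), ValidInstance b q →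
    ∀ (E : Fin n → Finset (Fin m)) (i : Fin n) (S : Finset (Fin m)),
      S.Nonempty → S ⊆ E i →
      util q (M n m b q (Function.update E i S)) i ≤ util q (M n m b q E) i

lemma util_two (q : Fin 2 → ℝ) (μ : Matching 2 2) (i : Fin 2) :
    util q μ i = (if μ 0 = some i then q 0 else 0) + (if μ 1 = some i then q 1 else 0) := by
  simp [util, assignedSet, Finset.sum_filter, Fin.sum_univ_two]

lemma load_two (μ : Matching 2 2) (i : Fin 2) :
    load μ i = (if μ 0 = some i then 1 else 0) + (if μ 1 = some i then 1 else 0) := by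
  simp only [load, Finset.card_filter, Fin.sum_univ_two]

lemma welfare_two (q : Fin 2 → ℝ) (μ : Matching 2 2) :
    welfare q μ = util q μ 0 + util q μ 1 := by
  simp [welfare, Fin.sum_univ_two]

lemma welfare_nonneg_two (q : Fin 2 → ℝ) (h0 : 0 ≤ q 0) (h1 : 0 ≤ q 1) (μ : Matching 2 2) :
    0 ≤ welfare q μ := by
  rw [welfare_two, util_two, util_two]
  split_ifs <;> linarith

lemma key_ineq (δ ε w : ℝ) (hεδ : ε < δ) (hε1 : ε ≤ 1) (hw0 : 0 ≤ w) (hw1 : w ≤ 1) :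
    (2 - δ) * w < 2 - ε := by
  rcases le_or_gt (2 - δ) 0 with h | h
  · nlinarith
  · nlinarith

set_option maxHeartbeats 1000000 in
/-- No deterministic truthful mechanism achieves an approximation ratio better than
`2`: for every such mechanism and every `δ > 0` there is an instance and a
`b`-matching whose welfare exceeds `(2 - δ)` times the welfare returned by the
mechanism on the truthful profile. -/
theorem no_truthful_mechanism_beats_two (M : Mechanism)
    (hF : Feasible M) (hT : Truthful M) (δ : ℝ) (hδ : 0 < δ) :
    ∃ (n m : ℕ) (b : Fin n → ℕ) (q : Fin m → ℝ)
      (E : Fin n → Finset (Fin m)) (μ : Matching n m),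
      ValidInstance b q ∧ IsBMatching b E μ ∧
      welfare q μ > (2 - δ) * welfare q (M n m b q E) := by
  classical
  set ε : ℝ := min δ 1 / 2 with hεdef
  have hε0 : 0 < ε := div_pos (lt_min hδ one_pos) two_pos
  have hεhalf : ε ≤ 1 / 2 := by
    have : min δ 1 ≤ 1 := min_le_right _ _
    simp only [hεdef]; linarith
  have hεδ : ε < δ := by
    have h1 : min δ 1 ≤ δ := min_le_left _ _
    simp only [hεdef]; linarith
  set b : Fin 2 → ℕ := fun _ => 1 with hb
  set q : Fin 2 → ℝ := fun j => if j = 0 then 1 else 1 - ε with hq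
  have hq0 : q 0 = 1 := by simp [hq]
  have hq1 : q 1 = 1 - ε := by simp [hq]
  have hqpos : ∀ j, 0 < q j := by
    intro j
    by_cases h : j = 0 <;> simp [hq, h] <;> linarith
  have hvalid : ValidInstance b q := ⟨fun _ => le_rfl, hqpos⟩
  set P : Fin 2 → Finset (Fin 2) := fun _ => Finset.univ with hP
  set μ := M 2 2 b q P with hμ
  obtain ⟨hPe, hPl⟩ := hF 2 2 b q P
  by_cases hA : μ 0 = some 0 ∧ μ 1 = some 1
  · -- agent 1 holds the low task; it deviates to report {t0}
    set E' := Function.update P 1 ({0} : Finset (Fin 2)) with hE'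
    have htr := hT 2 2 b q hvalid P 1 {0} ⟨0, Finset.mem_singleton_self 0⟩
      (by simp [hP])
    set μ' := M 2 2 b q E' with hμ'
    obtain ⟨hE'e, hE'l⟩ := hF 2 2 b q E'
    have hu1 : util q μ 1 = 1 - ε := by
      rw [util_two, hA.1, hA.2, hq1]; norm_num
    have hn1 : μ' 1 ≠ some 1 := by
      intro h
      have h' := hE'e 1 1 h
      rw [hE'] at h'
      simp [Function.update_self] at h'
    have hn0 : μ' 0 ≠ some 1 := by
      intro h
      have hu : util q μ' 1 = 1 := by
        rw [util_two, hq0]; simp [h, hn1]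
      rw [hu, hu1] at htr
      linarith
    have hl0 : load μ' 0 ≤ 1 := hE'l 0
    rw [load_two] at hl0
    have hw' : welfare q μ' ≤ 1 := by
      rw [welfare_two, util_two, util_two, hq0, hq1]
      by_cases c1 : μ' 0 = some 0 <;> by_cases c2 : μ' 1 = some 0 <;>
        simp_all <;> linarith [le_min hδ.le zero_le_one]
    have hw0 : 0 ≤ welfare q μ' :=
      welfare_nonneg_two q (le_of_lt (hqpos 0)) (le_of_lt (hqpos 1)) μ'
    refine ⟨2, 2, b, q, E', fun j => if j = 0 then some 1 else some 0,
      hvalid, ⟨?_, ?_⟩, ?_⟩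
    · intro j i h
      fin_cases j <;> fin_cases i
      · simp at h
      · rw [hE']; simp
      · rw [hE', Function.update_of_ne (by decide)]; simp [hP]
      · simp at h
    · intro i
      rw [load_two]
      fin_cases i <;> simp [hb]
    · have hwopt : welfare q (fun j => if j = 0 then some 1 else some 0 : Matching 2 2) = 2 - ε := by
        rw [welfare_two, util_two, util_two, hq0, hq1]
        norm_num
        ring
      rw [hwopt]
      have := key_ineq δ ε (welfare q μ') hεδ (by linarith) hw0 hw'
      linarith
  · by_cases hB : μ 0 = some 1 ∧ μ 1 = some 0
    · -- agent 0 holds the low task; it deviates to report {t0}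
      set E' := Function.update P 0 ({0} : Finset (Fin 2)) with hE'
      have htr := hT 2 2 b q hvalid P 0 {0} ⟨0, Finset.mem_singleton_self 0⟩
        (by simp [hP])
      set μ' := M 2 2 b q E' with hμ'
      obtain ⟨hE'e, hE'l⟩ := hF 2 2 b q E'
      have hu0 : util q μ 0 = 1 - ε := by
        rw [util_two, hB.1, hB.2, hq1]; norm_num
      have hn1 : μ' 1 ≠ some 0 := by
        intro h
        have h' := hE'e 1 0 h
        rw [hE'] at h'
        simp [Function.update_self] at h'
      have hn0 : μ' 0 ≠ some 0 := by
        intro h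
        have hu : util q μ' 0 = 1 := by
          rw [util_two, hq0]; simp [h, hn1]
        rw [hu, hu0] at htr
        linarith
      have hl1 : load μ' 1 ≤ 1 := hE'l 1
      rw [load_two] at hl1
      have hw' : welfare q μ' ≤ 1 := by
        rw [welfare_two, util_two, util_two, hq0, hq1]
        by_cases c1 : μ' 0 = some 1 <;> by_cases c2 : μ' 1 = some 1 <;>
          simp_all <;> linarith [le_min hδ.le zero_le_one]
      have hw0 : 0 ≤ welfare q μ' :=
        welfare_nonneg_two q (le_of_lt (hqpos 0)) (le_of_lt (hqpos 1)) μ'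
      refine ⟨2, 2, b, q, E', fun j => if j = 0 then some 0 else some 1,
        hvalid, ⟨?_, ?_⟩, ?_⟩
      · intro j i h
        fin_cases j <;> fin_cases i
        · rw [hE']; simp
        · simp at h
        · simp at h
        · rw [hE', Function.update_of_ne (by decide)]; simp [hP]
      · intro i
        rw [load_two]
        fin_cases i <;> simp [hb]
      · have hwopt : welfare q (fun j => if j = 0 then some 0 else some 1 : Matching 2 2) = 2 - ε := by
          rw [welfare_two, util_two, util_two, hq0, hq1]
          norm_num
          ring
        rw [hwopt]
        have := key_ineq δ ε (welfare q μ') hεδ (by linarith) hw0 hw'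
        linarith
    · -- the mechanism assigns at most one task on the truthful profile
      have hl0 : load μ 0 ≤ 1 := hPl 0
      have hl1 : load μ 1 ≤ 1 := hPl 1
      rw [load_two] at hl0 hl1
      have hw' : welfare q μ ≤ 1 := by
        rw [welfare_two, util_two, util_two, hq0, hq1]
        by_cases c1 : μ 0 = some 0 <;> by_cases c2 : μ 1 = some 0 <;>
          by_cases c3 : μ 0 = some 1 <;> by_cases c4 : μ 1 = some 1 <;>
          simp_all <;> linarith [le_min hδ.le zero_le_one]
      have hw0 : 0 ≤ welfare q μ :=
        welfare_nonneg_two q (le_of_lt (hqpos 0)) (le_of_lt (hqpos 1)) μ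
      refine ⟨2, 2, b, q, P, fun j => if j = 0 then some 0 else some 1,
        hvalid, ⟨?_, ?_⟩, ?_⟩
      · intro j i h
        simp [hP]
      · intro i
        rw [load_two]
        fin_cases i <;> simp [hb]
      · have hwopt : welfare q (fun j => if j = 0 then some 0 else some 1 : Matching 2 2) = 2 - ε := by
          rw [welfare_two, util_two, util_two, hq0, hq1]
          norm_num
          ring
        rw [hwopt]
        have := key_ineq δ ε (welfare q μ) hεδ (by linarith) hw0 hw'
        linarith
end

section
/- If all tasks have pairwise distinct values, then M_AP is group strategyproof: there is no coalition C of agents and reports S'_i ⊆ T_i for i ∈ C such that every member's utility under M_AP applied to (S'_C, T_{−C}) is at least its utility under the truthful profile, with strict inequality for at least one member. -/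
section MAPaux

variable {n m : ℕ}

/-- List-parametrized version of `topTasks`. -/
def topL (L : List (Fin m)) (S : Finset (Fin m)) (k : ℕ) : Finset (Fin m) :=
  ((L.filter fun j => decide (j ∈ S)).take k).toFinset

/-- List-parametrized version of `remTasks`. -/
def remL (b : Fin n → ℕ) (E : Fin n → Finset (Fin m)) (L : List (Fin m)) :
    ℕ → Finset (Fin m)
  | 0 => Finset.univ
  | i + 1 =>
    if h : i < n then
      remL b E L i \ topL L (E ⟨i, h⟩ ∩ remL b E L i) (b ⟨i, h⟩)
    else remL b E L i

/-- List-parametrized version of `FCFS`. -/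
def FCFSL (b : Fin n → ℕ) (E : Fin n → Finset (Fin m)) (L : List (Fin m)) (i : Fin n) :
    Finset (Fin m) :=
  topL L (E i ∩ remL b E L i.val) (b i)

lemma mem_topL {L : List (Fin m)} {S : Finset (Fin m)} {k : ℕ} {x : Fin m}
    (hx : x ∈ topL L S k) : x ∈ L ∧ x ∈ S := by
  simp only [topL, List.mem_toFinset] at hx
  have h2 := List.mem_filter.1 (List.take_subset _ _ hx)
  exact ⟨h2.1, of_decide_eq_true h2.2⟩

lemma topL_append_of_not_mem {S : Finset (Fin m)} {j : Fin m} (hj : j ∉ S)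
    (L : List (Fin m)) (k : ℕ) : topL (L ++ [j]) S k = topL L S k := by
  unfold topL
  rw [List.filter_append]
  simp [hj]

lemma topL_append_of_full {S : Finset (Fin m)} {j : Fin m} {k : ℕ} (L : List (Fin m))
    (h : k ≤ (L.filter fun x => decide (x ∈ S)).length) :
    topL (L ++ [j]) S k = topL L S k := by
  unfold topL
  rw [List.filter_append, List.take_append_of_le_length h]

lemma topL_append_of_avail {S : Finset (Fin m)} {j : Fin m} {k : ℕ} (L : List (Fin m))
    (hj : j ∈ S) (h : (L.filter fun x => decide (x ∈ S)).length < k) :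
    topL (L ++ [j]) S k = insert j (topL L S k) := by
  unfold topL
  rw [List.filter_append]
  have hfj : List.filter (fun x => decide (x ∈ S)) [j] = [j] := by simp [hj]
  rw [hfj, List.take_of_length_le (by simp; omega),
    List.take_of_length_le (le_of_lt h)]
  ext x
  simp [or_comm]

lemma topL_append_sdiff {j : Fin m} (L : List (Fin m)) (hjL : j ∉ L)
    (S : Finset (Fin m)) (k : ℕ) :
    topL (L ++ [j]) (S \ {j}) k = topL L S k := by
  unfold topL
  rw [List.filter_append]
  have h1 : List.filter (fun x => decide (x ∈ S \ {j})) [j] = [] := by simp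
  have h2 : List.filter (fun x => decide (x ∈ S \ {j})) L
      = List.filter (fun x => decide (x ∈ S)) L := by
    apply List.filter_congr
    intro x hx
    have hne : x ≠ j := fun h => hjL (h ▸ hx)
    simp [Finset.mem_sdiff, hne]
  rw [h1, h2, List.append_nil]

lemma mem_remL_of_not_mem (b : Fin n → ℕ) (E : Fin n → Finset (Fin m))
    {L : List (Fin m)} {j : Fin m} (hj : j ∉ L) :
    ∀ k, j ∈ remL b E L k
  | 0 => Finset.mem_univ j
  | k + 1 => by
    unfold remL
    split
    · exact Finset.mem_sdiff.2
        ⟨mem_remL_of_not_mem b E hj k, fun h => hj (mem_topL h).1⟩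
    · exact mem_remL_of_not_mem b E hj k

lemma remL_append_full (b : Fin n → ℕ) (E : Fin n → Finset (Fin m))
    {L : List (Fin m)} {j : Fin m} (hjL : j ∉ L)
    (hfull : ∀ i : Fin n, j ∈ E i →
      b i ≤ (L.filter fun x => decide (x ∈ E i ∩ remL b E L i.val)).length) :
    ∀ k, remL b E (L ++ [j]) k = remL b E L k
  | 0 => rfl
  | k + 1 => by
    unfold remL
    rw [remL_append_full b E hjL hfull k]
    split
    case isTrue h =>
      congr 1
      by_cases hje : j ∈ E ⟨k, h⟩
      · exact topL_append_of_full L (hfull ⟨k, h⟩ hje)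
      · exact topL_append_of_not_mem (fun hc => hje (Finset.mem_inter.1 hc).1) L _
    case isFalse h => rfl

lemma FCFSL_append_full (b : Fin n → ℕ) (E : Fin n → Finset (Fin m))
    {L : List (Fin m)} {j : Fin m} (hjL : j ∉ L)
    (hfull : ∀ i : Fin n, j ∈ E i →
      b i ≤ (L.filter fun x => decide (x ∈ E i ∩ remL b E L i.val)).length)
    (i : Fin n) : FCFSL b E (L ++ [j]) i = FCFSL b E L i := by
  unfold FCFSL
  rw [remL_append_full b E hjL hfull i.val]
  by_cases hje : j ∈ E i
  · exact topL_append_of_full L (hfull i hje)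
  · exact topL_append_of_not_mem (fun hc => hje (Finset.mem_inter.1 hc).1) L _

lemma remL_append_le (b : Fin n → ℕ) (E : Fin n → Finset (Fin m))
    {L : List (Fin m)} {j : Fin m} (hjL : j ∉ L) (istar : Fin n)
    (hmin : ∀ i : Fin n, i < istar → j ∈ E i →
      b i ≤ (L.filter fun x => decide (x ∈ E i ∩ remL b E L i.val)).length) :
    ∀ k, k ≤ istar.val → remL b E (L ++ [j]) k = remL b E L k
  | 0, _ => rfl
  | k + 1, hk => by
    unfold remL
    rw [remL_append_le b E hjL istar hmin k (le_of_lt hk)]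
    split
    case isTrue h =>
      congr 1
      have hlt : (⟨k, h⟩ : Fin n) < istar := Fin.lt_def.2 hk
      by_cases hje : j ∈ E ⟨k, h⟩
      · exact topL_append_of_full L (hmin ⟨k, h⟩ hlt hje)
      · exact topL_append_of_not_mem (fun hc => hje (Finset.mem_inter.1 hc).1) L _
    case isFalse h => rfl

lemma FCFSL_append_lt (b : Fin n → ℕ) (E : Fin n → Finset (Fin m))
    {L : List (Fin m)} {j : Fin m} (hjL : j ∉ L) (istar : Fin n)
    (hmin : ∀ i : Fin n, i < istar → j ∈ E i →
      b i ≤ (L.filter fun x => decide (x ∈ E i ∩ remL b E L i.val)).length)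
    (i : Fin n) (hi : i < istar) : FCFSL b E (L ++ [j]) i = FCFSL b E L i := by
  unfold FCFSL
  rw [remL_append_le b E hjL istar hmin i.val (le_of_lt hi)]
  by_cases hje : j ∈ E i
  · exact topL_append_of_full L (hmin i hi hje)
  · exact topL_append_of_not_mem (fun hc => hje (Finset.mem_inter.1 hc).1) L _

lemma FCFSL_append_eq (b : Fin n → ℕ) (E : Fin n → Finset (Fin m))
    {L : List (Fin m)} {j : Fin m} (hjL : j ∉ L) (istar : Fin n)
    (hmin : ∀ i : Fin n, i < istar → j ∈ E i →
      b i ≤ (L.filter fun x => decide (x ∈ E i ∩ remL b E L i.val)).length)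
    (hje : j ∈ E istar)
    (havail : (L.filter fun x =>
      decide (x ∈ E istar ∩ remL b E L istar.val)).length < b istar) :
    FCFSL b E (L ++ [j]) istar = insert j (FCFSL b E L istar) := by
  unfold FCFSL
  rw [remL_append_le b E hjL istar hmin istar.val le_rfl]
  exact topL_append_of_avail L
    (Finset.mem_inter.2 ⟨hje, mem_remL_of_not_mem b E hjL _⟩) havail

lemma remL_append_gt (b : Fin n → ℕ) (E : Fin n → Finset (Fin m))
    {L : List (Fin m)} {j : Fin m} (hjL : j ∉ L) (istar : Fin n)
    (hmin : ∀ i : Fin n, i < istar → j ∈ E i →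
      b i ≤ (L.filter fun x => decide (x ∈ E i ∩ remL b E L i.val)).length)
    (hje : j ∈ E istar)
    (havail : (L.filter fun x =>
      decide (x ∈ E istar ∩ remL b E L istar.val)).length < b istar) :
    ∀ k, istar.val < k → remL b E (L ++ [j]) k = remL b E L k \ {j}
  | 0, hk => absurd hk (Nat.not_lt_zero _)
  | k + 1, hk => by
    rcases Nat.lt_succ_iff_lt_or_eq.1 hk with hk' | hk'
    · -- istar.val < k
      have IH := remL_append_gt b E hjL istar hmin hje havail k hk'
      unfold remL
      rw [IH]
      split
      case isTrue h =>
        have hpool : E ⟨k, h⟩ ∩ (remL b E L k \ {j})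
            = (E ⟨k, h⟩ ∩ remL b E L k) \ {j} := by
          ext x; simp [Finset.mem_sdiff]; tauto
        rw [hpool, topL_append_sdiff L hjL]
        ext x; simp [Finset.mem_sdiff]; tauto
      case isFalse h => rfl
    · -- k = istar.val
      subst hk'
      have h : istar.val < n := istar.isLt
      unfold remL
      rw [dif_pos h, dif_pos h,
        remL_append_le b E hjL istar hmin istar.val le_rfl]
      have hfin : (⟨istar.val, h⟩ : Fin n) = istar := Fin.ext rfl
      rw [hfin,
        topL_append_of_avail L
          (Finset.mem_inter.2 ⟨hje, mem_remL_of_not_mem b E hjL _⟩) havail]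
      ext x; simp [Finset.mem_sdiff]; tauto

lemma FCFSL_append_gt (b : Fin n → ℕ) (E : Fin n → Finset (Fin m))
    {L : List (Fin m)} {j : Fin m} (hjL : j ∉ L) (istar : Fin n)
    (hmin : ∀ i : Fin n, i < istar → j ∈ E i →
      b i ≤ (L.filter fun x => decide (x ∈ E i ∩ remL b E L i.val)).length)
    (hje : j ∈ E istar)
    (havail : (L.filter fun x =>
      decide (x ∈ E istar ∩ remL b E L istar.val)).length < b istar)
    (i : Fin n) (hi : istar < i) : FCFSL b E (L ++ [j]) i = FCFSL b E L i := by
  unfold FCFSL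
  rw [remL_append_gt b E hjL istar hmin hje havail i.val hi]
  have hpool : E i ∩ (remL b E L i.val \ {j})
      = (E i ∩ remL b E L i.val) \ {j} := by
    ext x; simp [Finset.mem_sdiff]; tauto
  rw [hpool, topL_append_sdiff L hjL]

lemma card_topL {L : List (Fin m)} (hL : L.Nodup) (S : Finset (Fin m)) (k : ℕ) :
    (topL L S k).card = min k (L.filter fun x => decide (x ∈ S)).length := by
  unfold topL
  rw [List.toFinset_card_of_nodup ((List.take_sublist _ _).nodup (hL.filter _)),
    List.length_take]

end MAPaux

section MAPaux2

variable {n m : ℕ}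

lemma assigned_foldl (b : Fin n → ℕ) (E : Fin n → Finset (Fin m)) :
    ∀ L : List (Fin m), L.Nodup →
      ∀ i, assignedSet (L.foldl (apStep b E) fun _ => none) i = FCFSL b E L i := by
  intro L
  induction L using List.reverseRecOn with
  | nil =>
    intro _ i
    ext x
    simp [assignedSet, FCFSL, topL]
  | append_singleton L j IH =>
    intro hnd i
    rw [List.nodup_append] at hnd
    have hLnd : L.Nodup := hnd.1
    have hjL : j ∉ L := fun h => hnd.2.2 j h j (List.mem_singleton_self j) rfl
    set μ : Matching n m := L.foldl (apStep b E) (fun _ => none) with hμdef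
    have hμ : ∀ i, assignedSet μ i = FCFSL b E L i := IH hLnd
    have hμmem : ∀ (x : Fin m) (i : Fin n), μ x = some i ↔ x ∈ FCFSL b E L i := by
      intro x i
      rw [← hμ i]
      simp [assignedSet]
    have hload : ∀ i : Fin n, load μ i
        = min (b i) (L.filter fun x => decide (x ∈ E i ∩ remL b E L i.val)).length := by
      intro i
      have h1 : load μ i = (assignedSet μ i).card := rfl
      rw [h1, hμ i, FCFSL, card_topL hLnd]
    have hfoldl : (L ++ [j]).foldl (apStep b E) (fun _ => none) = apStep b E μ j := by
      rw [List.foldl_append]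
      rfl
    rw [hfoldl]
    unfold apStep
    rcases hfind : (List.finRange n).find?
        (fun i => decide (j ∈ E i ∧ load μ i < b i)) with _ | istar
    · -- none case
      have hfull : ∀ i : Fin n, j ∈ E i →
          b i ≤ (L.filter fun x => decide (x ∈ E i ∩ remL b E L i.val)).length := by
        intro i hje
        have h1 := List.find?_eq_none.1 hfind i (List.mem_finRange i)
        simp only [decide_eq_true_eq, not_and] at h1
        have h2 := h1 hje
        rw [hload i] at h2
        omega
      rw [FCFSL_append_full b E hjL hfull i]
      exact hμ i
    · -- some case
      obtain ⟨hp, as, bs, heq, hminp⟩ := List.find?_eq_some_iff_append.1 hfind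
      rw [decide_eq_true_eq] at hp
      have hje : j ∈ E istar := hp.1
      have havail : (L.filter fun x =>
          decide (x ∈ E istar ∩ remL b E L istar.val)).length < b istar := by
        have := hp.2
        rw [hload istar] at this
        omega
      have hmin : ∀ i : Fin n, i < istar → j ∈ E i →
          b i ≤ (L.filter fun x => decide (x ∈ E i ∩ remL b E L i.val)).length := by
        intro i hi hje'
        have hias : i ∈ as := by
          have hall : i ∈ as ++ istar :: bs := heq ▸ List.mem_finRange i
          have hpw : List.Pairwise (· < ·) (as ++ istar :: bs) :=
            heq ▸ List.pairwise_lt_finRange n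
          rcases List.mem_append.1 hall with h | h
          · exact h
          · rcases List.mem_cons.1 h with rfl | h
            · exact absurd hi (lt_irrefl _)
            · have := (List.pairwise_cons.1 (List.pairwise_append.1 hpw).2.1).1 i h
              exact absurd (lt_trans hi this) (lt_irrefl _)
        have h1 := hminp i hias
        simp only [Bool.not_eq_true', decide_eq_false_iff_not, not_and] at h1
        have h2 := h1 hje'
        rw [hload i] at h2
        omega
      -- now the update case
      ext x
      simp only [assignedSet, Finset.mem_filter, Finset.mem_univ, true_and,
        Function.update_apply]
      by_cases hx : x = j
      · subst hx
        rw [if_pos rfl]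
        rcases lt_trichotomy i istar with h | h | h
        · rw [FCFSL_append_lt b E hjL istar hmin i h]
          constructor
          · intro he
            exact absurd (Option.some.inj he).symm (ne_of_lt h)
          · intro hmem
            exact absurd (mem_topL hmem).1 hjL
        · subst h
          rw [FCFSL_append_eq b E hjL i hmin hje havail]
          simp
        · rw [FCFSL_append_gt b E hjL istar hmin hje havail i h]
          constructor
          · intro he
            exact absurd (Option.some.inj he) (ne_of_lt h)
          · intro hmem
            exact absurd (mem_topL hmem).1 hjL
      · rw [if_neg hx]
        rw [hμmem x i]
        rcases lt_trichotomy i istar with h | h | h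
        · rw [FCFSL_append_lt b E hjL istar hmin i h]
        · subst h
          rw [FCFSL_append_eq b E hjL i hmin hje havail, Finset.mem_insert]
          simp [hx]
        · rw [FCFSL_append_gt b E hjL istar hmin hje havail i h]

end MAPaux2


section MAPaux3

variable {n m : ℕ}

lemma taskOrder_nodup (q : Fin m → ℝ) : (taskOrder q).Nodup :=
  ((List.mergeSort_perm (List.finRange m) _).nodup_iff).2 (List.nodup_finRange m)

lemma taskOrder_pairwise {q : Fin m → ℝ} (hinj : Function.Injective q) :
    (taskOrder q).Pairwise fun j k => q k < q j := by
  have htrans : ∀ a b c : Fin m,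
      (fun j k => decide (q k < q j ∨ (q j = q k ∧ j ≤ k))) a b = true →
      (fun j k => decide (q k < q j ∨ (q j = q k ∧ j ≤ k))) b c = true →
      (fun j k => decide (q k < q j ∨ (q j = q k ∧ j ≤ k))) a c = true := by
    intro a b c h1 h2
    simp only [decide_eq_true_eq] at *
    rcases h1 with h1 | ⟨e1, le1⟩ <;> rcases h2 with h2 | ⟨e2, le2⟩
    · exact Or.inl (lt_trans h2 h1)
    · exact Or.inl (e2 ▸ h1)
    · exact Or.inl (e1 ▸ h2)
    · exact Or.inr ⟨e1.trans e2, le1.trans le2⟩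
  have htotal : ∀ a b : Fin m,
      ((fun j k => decide (q k < q j ∨ (q j = q k ∧ j ≤ k))) a b
        || (fun j k => decide (q k < q j ∨ (q j = q k ∧ j ≤ k))) b a) = true := by
    intro a b
    simp only [Bool.or_eq_true, decide_eq_true_eq]
    rcases lt_trichotomy (q a) (q b) with h | h | h
    · exact Or.inr (Or.inl h)
    · rcases le_total a b with h' | h'
      · exact Or.inl (Or.inr ⟨h, h'⟩)
      · exact Or.inr (Or.inr ⟨h.symm, h'⟩)
    · exact Or.inl (Or.inl h)
  have h1 := List.pairwise_mergeSort htrans htotal (List.finRange m)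
  have h2 : (taskOrder q).Pairwise (· ≠ ·) := taskOrder_nodup q
  have h3 := (h1 : (taskOrder q).Pairwise _).and h2
  refine h3.imp ?_
  rintro a c ⟨hle, hne⟩
  rw [decide_eq_true_eq] at hle
  rcases hle with h | ⟨heq, _⟩
  · exact h
  · exact absurd (hinj heq) hne

/-- Dominance: top-`k` of a sublist of a strictly `q`-decreasing list. -/
lemma sublist_take_sum {q : Fin m → ℝ} (hq : ∀ j, 0 < q j) :
    ∀ {A B : List (Fin m)}, A.Sublist B → B.Pairwise (fun j k => q k < q j) →
      ∀ k, ((A.take k).map q).sum ≤ ((B.take k).map q).sum ∧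
        (((A.take k).map q).sum = ((B.take k).map q).sum → A.take k = B.take k) := by
  intro A B h
  induction h with
  | slnil => intro _ k; simp
  | @cons l₁ l₂ a h ih =>
    intro hpw k
    obtain ⟨hhd, htl⟩ := List.pairwise_cons.1 hpw
    rcases Nat.eq_zero_or_pos k with rfl | hk
    · simp
    obtain ⟨k', rfl⟩ : ∃ k', k = k' + 1 := ⟨k - 1, by omega⟩
    have hsum_nonneg : ∀ (l : List (Fin m)), 0 ≤ (l.map q).sum := by
      intro l
      apply List.sum_nonneg
      intro x hx
      obtain ⟨y, _, rfl⟩ := List.mem_map.1 hx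
      exact le_of_lt (hq y)
    have key : ((l₂.take (k' + 1)).map q).sum < q a + ((l₂.take k').map q).sum := by
      rw [List.take_succ, List.map_append, List.sum_append]
      rcases hgt : l₂[k']? with _ | x
      · simp [hq a]
      · have hxl : x ∈ l₂ := List.mem_of_getElem? hgt
        have : ((Option.some x).toList.map q).sum = q x := by simp
        rw [this]
        have := hhd x hxl
        linarith
    have hA : ((l₁.take (k' + 1)).map q).sum ≤ ((l₂.take (k' + 1)).map q).sum :=
      (ih htl (k' + 1)).1
    have hBcons : (((a :: l₂).take (k' + 1)).map q).sum
        = q a + ((l₂.take k').map q).sum := by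
      simp [List.take_succ_cons]
    constructor
    · rw [hBcons]; linarith
    · intro heqs
      rw [hBcons] at heqs
      linarith
  | @cons_cons l₁ l₂ a h ih =>
    intro hpw k
    obtain ⟨hhd, htl⟩ := List.pairwise_cons.1 hpw
    rcases k with _ | k'
    · simp
    · simp only [List.take_succ_cons, List.map_cons, List.sum_cons]
      obtain ⟨ihle, iheq⟩ := ih htl k'
      constructor
      · linarith
      · intro he
        have hs : ((l₁.take k').map q).sum = ((l₂.take k').map q).sum := by linarith
        rw [iheq hs]

lemma filter_sublist_of_subset (L : List (Fin m)) {S T : Finset (Fin m)} (hST : S ⊆ T) :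
    (L.filter fun x => decide (x ∈ S)).Sublist (L.filter fun x => decide (x ∈ T)) := by
  have heq : (L.filter fun x => decide (x ∈ S))
      = ((L.filter fun x => decide (x ∈ T)).filter fun x => decide (x ∈ S)) := by
    rw [List.filter_filter]
    apply (List.filter_congr ?_).symm
    intro x _
    by_cases hx : x ∈ S
    · simp [hx, hST hx]
    · simp [hx]
  rw [heq]
  exact List.filter_sublist

end MAPaux3


section MAPbridge

variable {n m : ℕ}

lemma remTasks_eq_remL (b : Fin n → ℕ) (q : Fin m → ℝ) (E : Fin n → Finset (Fin m)) :
    ∀ k, remTasks b q E k = remL b E (taskOrder q) k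
  | 0 => rfl
  | k + 1 => by
    unfold remTasks remL
    rw [remTasks_eq_remL b q E k]
    rfl

lemma FCFS_eq_FCFSL (b : Fin n → ℕ) (q : Fin m → ℝ) (E : Fin n → Finset (Fin m))
    (i : Fin n) : FCFS b q E i = FCFSL b E (taskOrder q) i := by
  unfold FCFS FCFSL
  rw [remTasks_eq_remL]
  rfl

lemma assigned_MAP (b : Fin n → ℕ) (q : Fin m → ℝ) (E : Fin n → Finset (Fin m))
    (i : Fin n) : assignedSet (MAP b q E) i = FCFS b q E i := by
  rw [FCFS_eq_FCFSL]
  exact assigned_foldl b E (taskOrder q) (taskOrder_nodup q) i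

lemma util_MAP (b : Fin n → ℕ) (q : Fin m → ℝ) (E : Fin n → Finset (Fin m))
    (i : Fin n) :
    util q (MAP b q E) i =
      ((((taskOrder q).filter fun x =>
        decide (x ∈ E i ∩ remTasks b q E i.val)).take (b i)).map q).sum := by
  unfold util
  rw [assigned_MAP]
  unfold FCFS topTasks
  exact List.sum_toFinset q ((List.take_sublist _ _).nodup ((taskOrder_nodup q).filter _))

end MAPbridge

/-- If all tasks have pairwise distinct values, `M_AP` is group strategyproof: no
coalition can jointly hide edges so that no member is worse off and some member is
strictly better off. -/
theorem MAP_group_strategyproof (n m : ℕ) (b : Fin n → ℕ) (q : Fin m → ℝ)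
    (hb : ∀ i, 1 ≤ b i) (hq : ∀ j, 0 < q j) (hinj : Function.Injective q)
    (T : Fin n → Finset (Fin m)) :
    ¬ ∃ (C : Finset (Fin n)) (S' : Fin n → Finset (Fin m)),
        (∀ i ∈ C, (S' i).Nonempty ∧ S' i ⊆ T i) ∧
        (∀ i ∈ C,
          util q (MAP b q T) i ≤
            util q (MAP b q (fun k => if k ∈ C then S' k else T k)) i) ∧
        (∃ i ∈ C,
          util q (MAP b q T) i <
            util q (MAP b q (fun k => if k ∈ C then S' k else T k)) i) := by
  rintro ⟨C, S', h1, h2, h3⟩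
  set E' : Fin n → Finset (Fin m) := fun k => if k ∈ C then S' k else T k with hE'
  have key : ∀ k : ℕ, remTasks b q E' k = remTasks b q T k ∧
      ∀ i : Fin n, i.val < k → FCFS b q E' i = FCFS b q T i := by
    intro k
    induction k with
    | zero => exact ⟨rfl, fun i hi => absurd hi (Nat.not_lt_zero _)⟩
    | succ k IH =>
      by_cases h : k < n
      · have hFi : FCFS b q E' ⟨k, h⟩ = FCFS b q T ⟨k, h⟩ := by
          set i : Fin n := ⟨k, h⟩ with hidef
          by_cases hC : i ∈ C
          · have hEi : E' i = S' i := by simp [hE', hC]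
            have hsub : E' i ⊆ T i := by rw [hEi]; exact (h1 i hC).2
            have hpool : E' i ∩ remTasks b q T k ⊆ T i ∩ remTasks b q T k :=
              Finset.inter_subset_inter hsub le_rfl
            have hAB := filter_sublist_of_subset (taskOrder q) hpool
            have hBpw : ((taskOrder q).filter fun x =>
                decide (x ∈ T i ∩ remTasks b q T k)).Pairwise
                (fun j j' => q j' < q j) := (taskOrder_pairwise hinj).filter _
            have hdom := sublist_take_sum hq hAB hBpw (b i)
            have hUT : util q (MAP b q T) i
                = ((((taskOrder q).filter fun x =>
                  decide (x ∈ T i ∩ remTasks b q T k)).take (b i)).map q).sum := by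
              rw [util_MAP]
            have hUE : util q (MAP b q E') i
                = ((((taskOrder q).filter fun x =>
                  decide (x ∈ E' i ∩ remTasks b q T k)).take (b i)).map q).sum := by
              rw [util_MAP,
                show remTasks b q E' i.val = remTasks b q T k from IH.1]
            have hle := h2 i hC
            rw [hUT, hUE] at hle
            have heqtake := hdom.2 (le_antisymm hdom.1 hle)
            unfold FCFS topTasks
            rw [show remTasks b q E' i.val = remTasks b q T k from IH.1,
              show remTasks b q T i.val = remTasks b q T k from rfl]
            exact congrArg List.toFinset heqtake
          · have hEi : E' i = T i := by simp [hE', hC]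
            unfold FCFS
            rw [hEi, show remTasks b q E' i.val = remTasks b q T i.val from IH.1]
        refine ⟨?_, ?_⟩
        · show remTasks b q E' (k + 1) = remTasks b q T (k + 1)
          unfold remTasks
          rw [dif_pos h, dif_pos h, IH.1]
          congr 1
          have h2' := hFi
          unfold FCFS at h2'
          rw [show remTasks b q E' (⟨k, h⟩ : Fin n).val = remTasks b q T k
            from IH.1] at h2'
          exact h2'
        · intro i' hi'
          rcases Nat.lt_succ_iff_lt_or_eq.1 hi' with h' | h'
          · exact IH.2 i' h'
          · have hieq : i' = ⟨k, h⟩ := Fin.ext h'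
            rw [hieq]; exact hFi
      · refine ⟨?_, ?_⟩
        · unfold remTasks; rw [dif_neg h, dif_neg h]; exact IH.1
        · intro i' hi'
          exact IH.2 i' (by have := i'.isLt; omega)
  obtain ⟨i0, hi0C, hi0⟩ := h3
  have heq : util q (MAP b q E') i0 = util q (MAP b q T) i0 := by
    unfold util
    rw [assigned_MAP, assigned_MAP, (key n).2 i0 i0.isLt]
  rw [heq] at hi0
  exact lt_irrefl _ hi0
end
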